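/- arXiv:2311.06895 — 3 statements merged into one kernel-verified Lean document; each statement's English description precedes it below -/
import Mathlib

section
/- Theorem 2: If ‖xᵢⱼ‖ ≥ r_s > 0, then the control input uᵢ = −m(γ + 1/T_c)ẋᵢ satisfies the asymmetric decentralized CBF constraint: −2⟨ẋᵢ, xᵢⱼ⟩/‖xᵢⱼ‖ + T_c(yᵢⱼẋᵢⱼ − xᵢⱼẏᵢⱼ)²/‖xᵢⱼ‖³ − 2L_g h(qᵢⱼ)·uᵢ + γ(‖xᵢⱼ‖ − 2T_c⟨ẋᵢ, xᵢⱼ⟩/‖xᵢⱼ‖ − r_s) ≥ 0. -/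
/-! The gain `m (γ + 1/T_c)` is chosen so that the control term `-2 L_g h · uᵢ` equals
`2 (γ T_c + 1) ⟨ẋᵢ, xᵢⱼ⟩ / ‖xᵢⱼ‖`, which cancels the two velocity terms exactly.
What remains is `T_c (yᵢⱼ ẋᵢⱼ - xᵢⱼ ẏᵢⱼ)² / ‖xᵢⱼ‖³ + γ (‖xᵢⱼ‖ - r_s)`, a sum of two
nonnegative terms by the safety condition. -/

lemma div_mul_feedback_gain {m Tc : ℝ} (hm : m ≠ 0) (hTc : Tc ≠ 0) (γ n : ℝ) :
    Tc / (m * n) * (m * (γ + 1 / Tc)) = (γ * Tc + 1) / n := by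
  field_simp

theorem stmt_8_general (m γ Tc rs : ℝ) (hm : 0 < m) (hγ : 0 < γ) (hTc : 0 < Tc)
    (hrs : 0 < rs)
    (x1 y1 vx vy vi1 vi2 : ℝ) (n : ℝ)
    (hsafe : n ≥ rs)
    (ui1 ui2 : ℝ)
    (hui1 : ui1 = -(m * (γ + 1 / Tc)) * vi1)
    (hui2 : ui2 = -(m * (γ + 1 / Tc)) * vi2) :
    -2 * (vi1 * x1 + vi2 * y1) / n + Tc * (y1 * vx - x1 * vy) ^ 2 / n ^ 3
      - 2 * (Tc / (m * n)) * (x1 * ui1 + y1 * ui2)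
      + γ * (n - 2 * Tc * (vi1 * x1 + vi2 * y1) / n - rs) ≥ 0 := by
  subst hui1 hui2
  have hn : 0 < n := hrs.trans_le hsafe
  have hgain := div_mul_feedback_gain hm.ne' hTc.ne' γ n
  calc -2 * (vi1 * x1 + vi2 * y1) / n + Tc * (y1 * vx - x1 * vy) ^ 2 / n ^ 3
        - 2 * (Tc / (m * n)) * (x1 * (-(m * (γ + 1 / Tc)) * vi1)
          + y1 * (-(m * (γ + 1 / Tc)) * vi2))
        + γ * (n - 2 * Tc * (vi1 * x1 + vi2 * y1) / n - rs)
      = Tc * (y1 * vx - x1 * vy) ^ 2 / n ^ 3 + γ * (n - rs) := by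
        linear_combination 2 * (vi1 * x1 + vi2 * y1) * hgain
    _ ≥ 0 := add_nonneg (by positivity) (mul_nonneg hγ.le (sub_nonneg.mpr hsafe))

/-- Theorem 2: if ‖xᵢⱼ‖ ≥ r_s > 0, the input
uᵢ = −m(γ + 1/T_c)ẋᵢ satisfies the asymmetric decentralized CBF constraint,
where L_g h(qᵢⱼ)·uᵢ = (T_c/(m‖xᵢⱼ‖))⟨xᵢⱼ, uᵢ⟩.  Components:
xij = (x1, y1), ẋij = (vx, vy), ẋᵢ = vi ∈ ℝ², n = ‖xᵢⱼ‖. -/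
theorem stmt_8 (m γ Tc rs : ℝ) (hm : 0 < m) (hγ : 0 < γ) (hTc : 0 < Tc)
    (hrs : 0 < rs)
    (x1 y1 vx vy vi1 vi2 : ℝ) (n : ℝ)
    (hn : n = Real.sqrt (x1 ^ 2 + y1 ^ 2)) (hne : (x1, y1) ≠ (0, 0))
    (hsafe : n ≥ rs)
    (ui1 ui2 : ℝ)
    (hui1 : ui1 = -(m * (γ + 1 / Tc)) * vi1)
    (hui2 : ui2 = -(m * (γ + 1 / Tc)) * vi2) :
    -2 * (vi1 * x1 + vi2 * y1) / n + Tc * (y1 * vx - x1 * vy) ^ 2 / n ^ 3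
      - 2 * (Tc / (m * n)) * (x1 * ui1 + y1 * ui2)
      + γ * (n - 2 * Tc * (vi1 * x1 + vi2 * y1) / n - rs) ≥ 0 :=
  stmt_8_general m γ Tc rs hm hγ hTc hrs x1 y1 vx vy vi1 vi2 n hsafe ui1 ui2 hui1 hui2
end

section
/- In the 1D setting, the identity L_f h(q) + γh(q) = (ẋ·x/|x|)(1 + γT_c) + γ(|x| − r_s) holds, and consequently under the constraint ẋ·x/|x| ≥ max(−(|x|−r_s)/T_c, −γ(|x|−r_s)), the infimum of L_f h(q) + γh(q) over admissible (x, ẋ) with fixed s = ẋ·x/|x| < 0 equals max(s, s·γT_c). -/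
/-- in 1D, L_f h + γh = s(1 + γT_c) + γ(|x| − r_s) where
s = ẋ·x/|x|; and for fixed s < 0, the infimum of L_f h + γh over the admissible
region (|x| − r_s ≥ max(−sT_c, −s/γ)) equals max(s, sγT_c). -/
theorem stmt_12 (Tc γ rs s : ℝ) (hTc : 0 < Tc) (hγ : 0 < γ) (hrs : 0 < rs)
    (hs : s < 0) :
    (∀ x xd : ℝ, x ≠ 0 → xd * x / |x| = s →
      xd * x / |x| + γ * (|x| + (xd * x / |x|) * Tc - rs)
        = s * (1 + γ * Tc) + γ * (|x| - rs)) ∧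
    sInf {L : ℝ | ∃ d : ℝ, d ≥ max (-(s * Tc)) (-(s / γ)) ∧
        L = s * (1 + γ * Tc) + γ * d} = max s (s * γ * Tc) := by
  constructor
  · intro x xd hx hsv
    rw [hsv]; ring
  · set M := max (-(s * Tc)) (-(s / γ)) with hM
    have hset : {L : ℝ | ∃ d : ℝ, d ≥ M ∧ L = s * (1 + γ * Tc) + γ * d}
        = Set.Ici (s * (1 + γ * Tc) + γ * M) := by
      ext L
      constructor
      · rintro ⟨d, hd, rfl⟩
        simp only [Set.mem_Ici]
        nlinarith
      · intro hL
        refine ⟨(L - s * (1 + γ * Tc)) / γ, ?_, by field_simp; ring⟩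
        rw [ge_iff_le, le_div_iff₀ hγ]
        simp only [Set.mem_Ici] at hL
        nlinarith
    rw [hset, csInf_Ici]
    rcases le_total (-(s * Tc)) (-(s / γ)) with h | h
    · rw [hM, max_eq_right h]
      have h2 : s ≤ s * γ * Tc := by
        rw [neg_le_neg_iff, div_le_iff₀ hγ] at h
        nlinarith
      rw [max_eq_right h2]
      field_simp
      ring
    · rw [hM, max_eq_left h]
      have h2 : s * γ * Tc ≤ s := by
        rw [neg_le_neg_iff, le_div_iff₀ hγ] at h
        nlinarith
      rw [max_eq_left h2]
      ring
end

section
/- The common solution uᵢ = −m(γ + 1/T_c)ẋᵢ satisfies the asymmetric constraints simultaneously for all neighbors j in any finite set J, provided ‖xᵢⱼ‖ ≥ r_s for all j ∈ J; i.e., the feasible set of the agent-i QP under the proposed asymmetric weights is always nonempty. -/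
/-! With `u = -m (γ + 1/T_c) ẋᵢ` the control term `-(2T_c/(m‖x‖))⟨x, u⟩` equals
`2(1 + γ T_c)⟨ẋᵢ, x⟩/‖x‖`, which cancels both velocity terms of the constraint exactly.
What remains, `T_c (x × ẋ)² / ‖x‖³ + γ (‖x‖ - r_s)`, is nonnegative outside the safety radius. -/

/-- The constraint `E_j(u)` of the paper, for `xᵢⱼ = (x, y)`, `ẋᵢⱼ = (vx, vy)`, `ẋᵢ = (v₁, v₂)`,
`uᵢ = (u₁, u₂)` and `n = ‖xᵢⱼ‖`. -/
noncomputable def asymConstraint (m γ Tc rs x y vx vy n v₁ v₂ u₁ u₂ : ℝ) : ℝ :=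
  -2 * (v₁ * x + v₂ * y) / n
    + Tc * (y * vx - x * vy) ^ 2 / n ^ 3
    - (2 * Tc / (m * n)) * (x * u₁ + y * u₂)
    + γ * (n - 2 * Tc * (v₁ * x + v₂ * y) / n - rs)

theorem asymConstraint_commonInput_eq {m Tc n : ℝ} (hm : m ≠ 0) (hTc : Tc ≠ 0) (hn : n ≠ 0)
    (γ rs x y vx vy v₁ v₂ : ℝ) :
    asymConstraint m γ Tc rs x y vx vy n v₁ v₂
        (-(m * (γ + 1 / Tc)) * v₁) (-(m * (γ + 1 / Tc)) * v₂)
      = Tc * (y * vx - x * vy) ^ 2 / n ^ 3 + γ * (n - rs) := by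
  unfold asymConstraint
  field_simp
  ring

theorem asymConstraint_commonInput_nonneg {m γ Tc rs n : ℝ} (hm : m ≠ 0) (hγ : 0 ≤ γ)
    (hTc : 0 < Tc) (hn : 0 < n) (hsafe : rs ≤ n) (x y vx vy v₁ v₂ : ℝ) :
    0 ≤ asymConstraint m γ Tc rs x y vx vy n v₁ v₂
        (-(m * (γ + 1 / Tc)) * v₁) (-(m * (γ + 1 / Tc)) * v₂) := by
  rw [asymConstraint_commonInput_eq hm hTc.ne' hn.ne']
  have hgap : 0 ≤ γ * (n - rs) := mul_nonneg hγ (sub_nonneg.mpr hsafe)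
  positivity

theorem stmt_17_general {ι : Type*} (J : Finset ι) (m γ Tc rs : ℝ)
    (hm : 0 < m) (hγ : 0 < γ) (hTc : 0 < Tc) (hrs : 0 < rs)
    (x1 y1 vx vy n : ι → ℝ) (vi1 vi2 : ℝ)
    (hsafe : ∀ j ∈ J, n j ≥ rs)
    (ui1 ui2 : ℝ)
    (hui1 : ui1 = -(m * (γ + 1 / Tc)) * vi1)
    (hui2 : ui2 = -(m * (γ + 1 / Tc)) * vi2) :
    ∀ j ∈ J,
      -2 * (vi1 * x1 j + vi2 * y1 j) / n j
        + Tc * (y1 j * vx j - x1 j * vy j) ^ 2 / n j ^ 3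
        - (2 * Tc / (m * n j)) * (x1 j * ui1 + y1 j * ui2)
        + γ * (n j - 2 * Tc * (vi1 * x1 j + vi2 * y1 j) / n j - rs) ≥ 0 := by
  intro j hj
  subst hui1 hui2
  exact asymConstraint_commonInput_nonneg hm.ne' hγ.le hTc (hrs.trans_le (hsafe j hj))
    (hsafe j hj) (x1 j) (y1 j) (vx j) (vy j) vi1 vi2

/-- the common input uᵢ = −m(γ + 1/T_c)ẋᵢ satisfies the
asymmetric constraints E_j(uᵢ) ≥ 0 simultaneously for all neighbors j in a
finite set J, provided ‖xᵢⱼ‖ ≥ r_s for all j ∈ J; so the agent-i QP feasible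
set is nonempty. Components: xᵢⱼ = (x1 j, y1 j), ẋᵢⱼ = (vx j, vy j),
ẋᵢ = (vi1, vi2), n j = ‖xᵢⱼ‖. -/
theorem stmt_17 {ι : Type*} (J : Finset ι) (m γ Tc rs : ℝ)
    (hm : 0 < m) (hγ : 0 < γ) (hTc : 0 < Tc) (hrs : 0 < rs)
    (x1 y1 vx vy n : ι → ℝ) (vi1 vi2 : ℝ)
    (hn : ∀ j ∈ J, n j = Real.sqrt (x1 j ^ 2 + y1 j ^ 2))
    (hsafe : ∀ j ∈ J, n j ≥ rs)
    (ui1 ui2 : ℝ)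
    (hui1 : ui1 = -(m * (γ + 1 / Tc)) * vi1)
    (hui2 : ui2 = -(m * (γ + 1 / Tc)) * vi2) :
    ∀ j ∈ J,
      -2 * (vi1 * x1 j + vi2 * y1 j) / n j
        + Tc * (y1 j * vx j - x1 j * vy j) ^ 2 / n j ^ 3
        - (2 * Tc / (m * n j)) * (x1 j * ui1 + y1 j * ui2)
        + γ * (n j - 2 * Tc * (vi1 * x1 j + vi2 * y1 j) / n j - rs) ≥ 0 :=
  stmt_17_general J m γ Tc rs hm hγ hTc hrs x1 y1 vx vy n vi1 vi2 hsafe ui1 ui2 hui1 hui2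
end
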